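/- Let E ∈ M_n(ℝ) be tropically idempotent. Then E_{i,i} = 0 if and only if node i lies on a cycle of total weight 0 in the weighted digraph of E (i.e. i is a critical node of E). -/

import Mathlib

open Finset

/-- Tropical (max-plus) matrix multiplication on n × n real matrices. -/
noncomputable def tmul {n : ℕ} [NeZero n] (A B : Matrix (Fin n) (Fin n) ℝ) :
    Matrix (Fin n) (Fin n) ℝ :=
  fun i j => univ.sup' univ_nonempty (fun k => A i k + B k j)

/-- Weight of the cycle c 0 → c 1 → ⋯ → c k → c 0 in the weighted digraph of A. -/
noncomputable def cycleWeight {n k : ℕ} (A : Matrix (Fin n) (Fin n) ℝ)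
    (c : Fin (k + 1) → Fin n) : ℝ :=
  ∑ i, A (c i) (c (i + 1))

/-- For a tropically idempotent E ∈ M_n(ℝ): E_{i,i} = 0 if and only if node i
lies on a cycle of total weight 0 in the weighted digraph of E
(i.e. i is a critical node of E). -/
theorem idempotent_diag_zero_iff_critical {n : ℕ} [NeZero n]
    (E : Matrix (Fin n) (Fin n) ℝ) (hE : tmul E E = E) (i : Fin n) :
    E i i = 0 ↔ ∃ (k : ℕ) (c : Fin (k + 1) → Fin n), c 0 = i ∧ cycleWeight E c = 0 := by
  have tri : ∀ a b c : Fin n, E a b + E b c ≤ E a c := by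
    intro a b c
    have := congrFun (congrFun hE a) c
    rw [← this]
    exact Finset.le_sup' (fun k => E a k + E k c) (Finset.mem_univ b)
  have path : ∀ m (f : ℕ → Fin n),
      ∑ j ∈ Finset.range (m + 1), E (f j) (f (j + 1)) ≤ E (f 0) (f (m + 1)) := by
    intro m f
    induction m with
    | zero => simp
    | succ m ih =>
      rw [Finset.sum_range_succ]
      calc (∑ j ∈ Finset.range (m + 1), E (f j) (f (j + 1))) + E (f (m+1)) (f (m+2))
          ≤ E (f 0) (f (m + 1)) + E (f (m+1)) (f (m+2)) := by
            exact add_le_add_left ih _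
        _ ≤ E (f 0) (f (m + 2)) := tri _ _ _
  constructor
  · intro h
    exact ⟨0, fun _ => i, rfl, by simp [cycleWeight, h]⟩
  · rintro ⟨k, c, hc0, hw⟩
    have hle : E i i ≤ 0 := by
      have := tri i i i
      linarith
    have hge : (0 : ℝ) ≤ E i i := by
      open Fin.NatCast in
      have key : cycleWeight E c ≤ E (c 0) (c 0) := by
        have hsum : cycleWeight E c
            = ∑ j ∈ Finset.range (k + 1), E (c j) (c (j + 1)) := by
          rw [cycleWeight, ← Fin.sum_univ_eq_sum_range]
          apply Finset.sum_congr rfl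
          intro x _
          congr 1 <;> simp [Fin.cast_val_eq_self]
        have hlast : ((k + 1 : ℕ) : Fin (k + 1)) = 0 := by
          simp
        have := path k (fun j => c (j : Fin (k + 1)))
        simpa [hsum, hlast] using this
      rw [hw, hc0] at key
      exact key
    linarith
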